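/- Let T be a bounded linear operator on a complex Hilbert space H and N an algebra norm on B(H). Then dw_N(T) ≥ (1/2) sqrt( N(T² + (T*)²) + 2 N(|T|)⁴ + 2 |N(Re(T))² + N(|T|)⁴ − N(Im(T))²| ). -/

import Mathlib

/-!
Evaluating the supremum defining `dw_N(T)` at `θ = 0` and `θ = π/2` gives
`dw_N(T)² ≥ a := N(Re T)² + N(|T|)⁴` and `dw_N(T)² ≥ b := N(Im T)²`, since `|T|` is self-adjoint,
so `Re(|T|) = |T|` and `Re(i|T|) = 0`. On the other hand `T² + T*² = 2 Re(T)² - 2 Im(T)²`, so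
submultiplicativity gives `N(T² + T*²) + 2 N(|T|)⁴ ≤ 2a + 2b`, and `2a + 2b + 2|a - b| = 4 max a b`.
-/

open ContinuousLinearMap Complex

variable {H : Type*} [NormedAddCommGroup H] [InnerProductSpace ℂ H] [CompleteSpace H]

/-- Real part of an operator: `Re(A) = (A + A*)/2`. -/
noncomputable def reOp (A : H →L[ℂ] H) : H →L[ℂ] H := (2 : ℂ)⁻¹ • (A + adjoint A)

/-- Imaginary part of an operator: `Im(A) = (A - A*)/(2i)`. -/
noncomputable def imOp (A : H →L[ℂ] H) : H →L[ℂ] H := (2 * I)⁻¹ • (A - adjoint A)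

/-- Modulus of an operator: `|A| = (A* A)^{1/2}`. -/
noncomputable def absOp (A : H →L[ℂ] H) : H →L[ℂ] H := CFC.sqrt (adjoint A * A)

/-- Generalized numerical radius. -/
noncomputable def wN (N : (H →L[ℂ] H) → ℝ) (T : H →L[ℂ] H) : ℝ :=
  ⨆ θ : ℝ, N (reOp (Complex.exp (θ * I) • T))

/-- Generalized Davis–Wielandt radius. -/
noncomputable def dwN (N : (H →L[ℂ] H) → ℝ) (T : H →L[ℂ] H) : ℝ :=
  ⨆ θ : ℝ, Real.sqrt ((N (reOp (Complex.exp (θ * I) • T))) ^ 2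
    + (N (reOp (Complex.exp (θ * I) • absOp T))) ^ 4)

lemma isSelfAdjoint_absOp (T : H →L[ℂ] H) : IsSelfAdjoint (absOp T) :=
  IsSelfAdjoint.of_nonneg (CFC.sqrt_nonneg _)

lemma reOp_smul (c : ℂ) (A : H →L[ℂ] H) :
    reOp (c • A) = (2 : ℂ)⁻¹ • (c • A + (starRingEnd ℂ) c • adjoint A) := by
  rw [reOp, ← star_eq_adjoint, star_smul, star_eq_adjoint]
  rfl

lemma reOp_of_isSelfAdjoint {A : H →L[ℂ] H} (hA : IsSelfAdjoint A) : reOp A = A := by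
  rw [reOp, isSelfAdjoint_iff'.mp hA, ← two_smul ℂ A, smul_smul]
  norm_num

lemma reOp_I_smul (A : H →L[ℂ] H) : reOp (I • A) = -imOp A := by
  rw [reOp_smul, imOp, conj_I, neg_smul, ← sub_eq_add_neg, ← smul_sub, smul_smul, ← neg_smul,
    mul_inv, inv_I]
  ring_nf

lemma reOp_I_smul_of_isSelfAdjoint {A : H →L[ℂ] H} (hA : IsSelfAdjoint A) :
    reOp (I • A) = 0 := by
  rw [reOp_I_smul, imOp, isSelfAdjoint_iff'.mp hA, sub_self, smul_zero, neg_zero]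

lemma sq_add_adjoint_sq (T : H →L[ℂ] H) :
    T ^ 2 + adjoint T ^ 2 = (2 : ℂ) • reOp T ^ 2 - (2 : ℂ) • imOp T ^ 2 := by
  have hsum : (T + adjoint T) ^ 2 + (T - adjoint T) ^ 2 = (2 : ℂ) • (T ^ 2 + adjoint T ^ 2) := by
    rw [two_smul]
    noncomm_ring
  have hre : (2 : ℂ) * (2 : ℂ)⁻¹ ^ 2 = 2⁻¹ := by norm_num
  have him : (2 : ℂ) * (2 * I)⁻¹ ^ 2 = -2⁻¹ := by
    rw [inv_pow, mul_pow, I_sq]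
    norm_num
  rw [reOp, imOp, smul_pow, smul_pow, smul_smul, smul_smul, hre, him, neg_smul, sub_neg_eq_add,
    ← smul_add, hsum, smul_smul]
  norm_num

section AlgebraNorm

variable {N : (H →L[ℂ] H) → ℝ}

lemma norm_reOp_smul_le (hNadd : ∀ A B : H →L[ℂ] H, N (A + B) ≤ N A + N B)
    (hNsmul : ∀ (c : ℂ) (A : H →L[ℂ] H), N (c • A) = ‖c‖ * N A)
    {c : ℂ} (hc : ‖c‖ = 1) (A : H →L[ℂ] H) :
    N (reOp (c • A)) ≤ (N A + N (adjoint A)) / 2 := by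
  have hsum : N (c • A + (starRingEnd ℂ) c • adjoint A) ≤ N A + N (adjoint A) := by
    refine (hNadd _ _).trans_eq ?_
    rw [hNsmul, hNsmul, RCLike.norm_conj, hc, one_mul, one_mul]
  rw [reOp_smul, hNsmul, norm_inv, RCLike.norm_ofNat]
  linarith

lemma norm_sq_add_adjoint_sq_le (hNadd : ∀ A B : H →L[ℂ] H, N (A + B) ≤ N A + N B)
    (hNsmul : ∀ (c : ℂ) (A : H →L[ℂ] H), N (c • A) = ‖c‖ * N A)
    (hNmul : ∀ A B : H →L[ℂ] H, N (A * B) ≤ N A * N B) (T : H →L[ℂ] H) :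
    N (T ^ 2 + adjoint T ^ 2) ≤ 2 * N (reOp T) ^ 2 + 2 * N (imOp T) ^ 2 := by
  have hsq : ∀ A : H →L[ℂ] H, N (A ^ 2) ≤ N A ^ 2 := fun A => by
    simpa only [sq] using hNmul A A
  rw [sq_add_adjoint_sq, sub_eq_add_neg, ← neg_smul]
  calc _ ≤ N ((2 : ℂ) • reOp T ^ 2) + N ((-2 : ℂ) • imOp T ^ 2) := hNadd _ _
    _ = 2 * N (reOp T ^ 2) + 2 * N (imOp T ^ 2) := by
      rw [hNsmul, hNsmul, norm_neg, RCLike.norm_ofNat]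
    _ ≤ _ := by linarith [hsq (reOp T), hsq (imOp T)]

lemma sqrt_le_dwN (hN0 : ∀ A : H →L[ℂ] H, 0 ≤ N A)
    (hNadd : ∀ A B : H →L[ℂ] H, N (A + B) ≤ N A + N B)
    (hNsmul : ∀ (c : ℂ) (A : H →L[ℂ] H), N (c • A) = ‖c‖ * N A)
    (T : H →L[ℂ] H) (θ : ℝ) :
    Real.sqrt (N (reOp (exp (θ * I) • T)) ^ 2 + N (reOp (exp (θ * I) • absOp T)) ^ 4)
      ≤ dwN N T := by
  have hc : ∀ θ : ℝ, ‖exp (θ * I)‖ = 1 := norm_exp_ofReal_mul_I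
  refine le_ciSup (f := fun θ : ℝ => Real.sqrt (N (reOp (exp (θ * I) • T)) ^ 2
    + N (reOp (exp (θ * I) • absOp T)) ^ 4)) ?_ θ
  refine ⟨Real.sqrt (((N T + N (adjoint T)) / 2) ^ 2
      + ((N (absOp T) + N (adjoint (absOp T))) / 2) ^ 4), ?_⟩
  rintro _ ⟨θ, rfl⟩
  dsimp only
  gcongr
  · exact hN0 _
  · exact norm_reOp_smul_le hNadd hNsmul (hc θ) T
  · exact hN0 _
  · exact norm_reOp_smul_le hNadd hNsmul (hc θ) (absOp T)

lemma sqrt_reOp_sq_add_absOp_pow_four_le_dwN (hN0 : ∀ A : H →L[ℂ] H, 0 ≤ N A)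
    (hNadd : ∀ A B : H →L[ℂ] H, N (A + B) ≤ N A + N B)
    (hNsmul : ∀ (c : ℂ) (A : H →L[ℂ] H), N (c • A) = ‖c‖ * N A)
    (T : H →L[ℂ] H) :
    Real.sqrt (N (reOp T) ^ 2 + N (absOp T) ^ 4) ≤ dwN N T := by
  simpa [reOp_of_isSelfAdjoint (isSelfAdjoint_absOp T)] using sqrt_le_dwN hN0 hNadd hNsmul T 0

lemma imOp_le_dwN (hN0 : ∀ A : H →L[ℂ] H, 0 ≤ N A)
    (hNadd : ∀ A B : H →L[ℂ] H, N (A + B) ≤ N A + N B)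
    (hNsmul : ∀ (c : ℂ) (A : H →L[ℂ] H), N (c • A) = ‖c‖ * N A)
    (T : H →L[ℂ] H) : N (imOp T) ≤ dwN N T := by
  have hθ : exp (((Real.pi / 2 : ℝ) : ℂ) * I) = I := by
    rw [exp_mul_I, ← ofReal_cos, ← ofReal_sin, Real.cos_pi_div_two, Real.sin_pi_div_two]
    simp
  have hT : N (reOp (I • T)) = N (imOp T) := by
    rw [reOp_I_smul, ← neg_one_smul ℂ, hNsmul, norm_neg, norm_one, one_mul]
  have habs : N (reOp (I • absOp T)) = 0 := by
    rw [reOp_I_smul_of_isSelfAdjoint (isSelfAdjoint_absOp T), ← zero_smul ℂ (0 : H →L[ℂ] H),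
      hNsmul, norm_zero, zero_mul]
  have h := sqrt_le_dwN hN0 hNadd hNsmul T (Real.pi / 2)
  rwa [hθ, hT, habs, zero_pow four_ne_zero, add_zero, Real.sqrt_sq (hN0 _)] at h

end AlgebraNorm

lemma half_sqrt_add_two_abs_sub_le {x a b d : ℝ} (ha : Real.sqrt a ≤ d) (hb : Real.sqrt b ≤ d)
    (hx : x ≤ 2 * a + 2 * b) : 1 / 2 * Real.sqrt (x + 2 * |a - b|) ≤ d := by
  obtain ⟨hd, ha⟩ := Real.sqrt_le_iff.mp ha
  obtain ⟨-, hb⟩ := Real.sqrt_le_iff.mp hb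
  have habs : x + 2 * |a - b| ≤ (2 * d) ^ 2 := by
    cases abs_cases (a - b) <;> nlinarith
  have := Real.sqrt_le_sqrt habs
  rw [Real.sqrt_sq (by positivity)] at this
  linarith

theorem stmt_6_general (N : (H →L[ℂ] H) → ℝ) (T : H →L[ℂ] H)
    (hN0 : ∀ A : H →L[ℂ] H, 0 ≤ N A)
    (hNadd : ∀ A B : H →L[ℂ] H, N (A + B) ≤ N A + N B)
    (hNsmul : ∀ (c : ℂ) (A : H →L[ℂ] H), N (c • A) = ‖c‖ * N A)
    (hNmul : ∀ A B : H →L[ℂ] H, N (A * B) ≤ N A * N B) :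
    dwN N T ≥ (1 / 2) * Real.sqrt (N (T ^ 2 + (adjoint T) ^ 2)
      + 2 * (N (absOp T)) ^ 4
      + 2 * |(N (reOp T)) ^ 2 + (N (absOp T)) ^ 4 - (N (imOp T)) ^ 2|) := by
  have hre := sqrt_reOp_sq_add_absOp_pow_four_le_dwN hN0 hNadd hNsmul T
  have him : Real.sqrt (N (imOp T) ^ 2) ≤ dwN N T := by
    rw [Real.sqrt_sq (hN0 _)]
    exact imOp_le_dwN hN0 hNadd hNsmul T
  refine half_sqrt_add_two_abs_sub_le hre him ?_
  linarith [norm_sq_add_adjoint_sq_le hNadd hNsmul hNmul T]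

theorem stmt_6 (N : (H →L[ℂ] H) → ℝ) (T : H →L[ℂ] H)
    (hN0 : ∀ A : H →L[ℂ] H, 0 ≤ N A)
    (hNeq : ∀ A : H →L[ℂ] H, N A = 0 → A = 0)
    (hNadd : ∀ A B : H →L[ℂ] H, N (A + B) ≤ N A + N B)
    (hNsmul : ∀ (c : ℂ) (A : H →L[ℂ] H), N (c • A) = ‖c‖ * N A)
    (hNmul : ∀ A B : H →L[ℂ] H, N (A * B) ≤ N A * N B) :
    dwN N T ≥ (1 / 2) * Real.sqrt (N (T ^ 2 + (adjoint T) ^ 2)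
      + 2 * (N (absOp T)) ^ 4
      + 2 * |(N (reOp T)) ^ 2 + (N (absOp T)) ^ 4 - (N (imOp T)) ^ 2|) :=
  stmt_6_general N T hN0 hNadd hNsmul hNmul
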